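/- Let ρ^{SA} be a bipartite density matrix and {Π_a}, {Π'_b} two POVMs on the ancilla such that {Π'_b} is a coarse-graining of {Π_a} (i.e., Π'_b = Σ_a λ_{ba} Π_a with λ_{ba} ≥ 0, Σ_b λ_{ba} = 1). Then the daemonic ergotropy of the finer POVM dominates: Σ_a p_a E(ρ_a^S) ≥ Σ_b q_b E(σ_b^S), where (p_a, ρ_a^S) and (q_b, σ_b^S) are the outcome probabilities and conditional system states of the two POVMs. -/

import Mathlib

open Matrix
open scoped ComplexOrder

/-- Energy of a state `ρ` with respect to Hamiltonian `H`: `Tr[Hρ]` (real part). -/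
noncomputable def energy {d : ℕ} (H ρ : Matrix (Fin d) (Fin d) ℂ) : ℝ :=
  (Matrix.trace (H * ρ)).re

/-- Minimal energy achievable from `ρ` by unitaries (passive-state energy). -/
noncomputable def passiveEnergy {d : ℕ} (H ρ : Matrix (Fin d) (Fin d) ℂ) : ℝ :=
  sInf {x : ℝ | ∃ U ∈ Matrix.unitaryGroup (Fin d) ℂ, x = energy H (U * ρ * Uᴴ)}

/-- Ergotropy: maximal work extractable by unitaries. -/
noncomputable def ergotropy {d : ℕ} (H ρ : Matrix (Fin d) (Fin d) ℂ) : ℝ :=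
  energy H ρ - passiveEnergy H ρ

open Kronecker

/-- Partial trace over the ancilla (second factor). -/
noncomputable def ptraceA {dS dA : ℕ} (M : Matrix (Fin dS × Fin dA) (Fin dS × Fin dA) ℂ) :
    Matrix (Fin dS) (Fin dS) ℂ :=
  Matrix.of fun i j => ∑ k : Fin dA, M (i, k) (j, k)

/-- Probability of outcome associated to the POVM element `P` on the ancilla. -/
noncomputable def outProb {dS dA : ℕ} (ρSA : Matrix (Fin dS × Fin dA) (Fin dS × Fin dA) ℂ)
    (P : Matrix (Fin dA) (Fin dA) ℂ) : ℝ :=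
  (Matrix.trace (ρSA * ((1 : Matrix (Fin dS) (Fin dS) ℂ) ⊗ₖ P))).re

/-- Conditional (normalized) state of the system given the POVM element `P`. -/
noncomputable def condState {dS dA : ℕ} (ρSA : Matrix (Fin dS × Fin dA) (Fin dS × Fin dA) ℂ)
    (P : Matrix (Fin dA) (Fin dA) ℂ) : Matrix (Fin dS) (Fin dS) ℂ :=
  (outProb ρSA P)⁻¹ • ptraceA (ρSA * ((1 : Matrix (Fin dS) (Fin dS) ℂ) ⊗ₖ P))

/-! Write `τ P = Tr_A[ρ (1 ⊗ P)]` for the unnormalized conditional state, linear in `P`. Each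
summand `p E(τ P / p)` equals `E(τ P)`: ergotropy is positively homogeneous, and when `p = 0`
already `ρ (1 ⊗ P) = 0`, both factors being positive. Coarse-graining gives
`τ (Π'_b) = ∑_a λ_{ba} τ (Π_a)`, and ergotropy is sublinear, since energy is linear while the
passive energy is an infimum of linear functionals over the compact unitary group. Summing over
`b` and using `∑_b λ_{ba} = 1` gives the claim. -/

namespace Matrix

variable {𝕜 n : Type*} [RCLike 𝕜] [Fintype n]

theorem PosSemidef.trace_mul_nonneg {A B : Matrix n n 𝕜} (hA : A.PosSemidef)
    (hB : B.PosSemidef) : 0 ≤ (A * B).trace := by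
  classical
  open scoped MatrixOrder in
  obtain ⟨X, rfl⟩ := CStarAlgebra.nonneg_iff_eq_star_mul_self.mp hA.nonneg
  rw [star_eq_conjTranspose, Matrix.mul_assoc, trace_mul_comm, Matrix.mul_assoc,
    ← Matrix.mul_assoc]
  exact (hB.mul_mul_conjTranspose_same X).trace_nonneg

theorem PosSemidef.trace_mul_eq_zero_iff {A B : Matrix n n 𝕜} (hA : A.PosSemidef)
    (hB : B.PosSemidef) : (A * B).trace = 0 ↔ A * B = 0 := by
  classical
  refine ⟨fun h => ?_, fun h => by rw [h, trace_zero]⟩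
  open scoped MatrixOrder in
  obtain ⟨X, rfl⟩ := CStarAlgebra.nonneg_iff_eq_star_mul_self.mp hA.nonneg
  open scoped MatrixOrder in
  obtain ⟨Y, rfl⟩ := CStarAlgebra.nonneg_iff_eq_star_mul_self.mp hB.nonneg
  simp only [star_eq_conjTranspose] at h ⊢
  -- `(X Yᴴ)ᴴ (X Yᴴ) = Y Xᴴ X Yᴴ` has the same trace as `Xᴴ X Yᴴ Y`
  have hXY : X * Yᴴ = 0 := by
    rw [← trace_conjTranspose_mul_self_eq_zero_iff, ← h, conjTranspose_mul,
      conjTranspose_conjTranspose]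
    simp only [Matrix.mul_assoc]
    rw [trace_mul_comm]
    simp only [Matrix.mul_assoc]
  rw [Matrix.mul_assoc, ← Matrix.mul_assoc X, hXY, Matrix.zero_mul, Matrix.mul_zero]

theorem isCompact_unitaryGroup [DecidableEq n] :
    IsCompact (unitaryGroup n 𝕜 : Set (Matrix n n 𝕜)) :=
  (isCompact_univ_pi fun _ => isCompact_univ_pi fun _ => isCompact_closedBall (0 : 𝕜) 1)
    |>.of_isClosed_subset (isClosed_unitary (R := Matrix n n 𝕜)) fun _ hU i _ j _ => by
      simpa using entry_norm_bound_of_unitary hU i j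

end Matrix

section Ergotropy

open scoped Pointwise

variable {d : ℕ} (H : Matrix (Fin d) (Fin d) ℂ)

theorem energy_smul (r : ℝ) (ρ : Matrix (Fin d) (Fin d) ℂ) :
    energy H (r • ρ) = r * energy H ρ := by
  simp [energy]

theorem energy_sum {ι : Type*} (s : Finset ι) (ρ : ι → Matrix (Fin d) (Fin d) ℂ) :
    energy H (∑ a ∈ s, ρ a) = ∑ a ∈ s, energy H (ρ a) := by
  simp [energy, Finset.mul_sum, trace_sum, Complex.re_sum]

theorem passiveEnergy_eq_sInf_image (ρ : Matrix (Fin d) (Fin d) ℂ) :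
    passiveEnergy H ρ = sInf ((fun U => energy H (U * ρ * Uᴴ)) '' unitaryGroup (Fin d) ℂ) := by
  simp only [passiveEnergy, Set.image, eq_comm]
  rfl

theorem bddBelow_energy_conj (ρ : Matrix (Fin d) (Fin d) ℂ) :
    BddBelow ((fun U => energy H (U * ρ * Uᴴ)) '' unitaryGroup (Fin d) ℂ) :=
  (isCompact_unitaryGroup.image (by unfold energy; fun_prop)).bddBelow

theorem passiveEnergy_le_energy_conj (ρ : Matrix (Fin d) (Fin d) ℂ) {U : Matrix (Fin d) (Fin d) ℂ}
    (hU : U ∈ unitaryGroup (Fin d) ℂ) : passiveEnergy H ρ ≤ energy H (U * ρ * Uᴴ) := by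
  rw [passiveEnergy_eq_sInf_image]
  exact csInf_le (bddBelow_energy_conj H ρ) ⟨U, hU, rfl⟩

theorem le_passiveEnergy {ρ : Matrix (Fin d) (Fin d) ℂ} {c : ℝ}
    (h : ∀ U ∈ unitaryGroup (Fin d) ℂ, c ≤ energy H (U * ρ * Uᴴ)) : c ≤ passiveEnergy H ρ := by
  rw [passiveEnergy_eq_sInf_image]
  exact le_csInf ⟨_, 1, one_mem _, rfl⟩ (Set.forall_mem_image.mpr h)

theorem passiveEnergy_smul {r : ℝ} (hr : 0 ≤ r) (ρ : Matrix (Fin d) (Fin d) ℂ) :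
    passiveEnergy H (r • ρ) = r * passiveEnergy H ρ := by
  have himage : (fun U => energy H (U * (r • ρ) * Uᴴ)) '' unitaryGroup (Fin d) ℂ
      = r • (fun U => energy H (U * ρ * Uᴴ)) '' unitaryGroup (Fin d) ℂ := by
    rw [← Set.image_smul, Set.image_image]
    simp only [Matrix.mul_smul, Matrix.smul_mul, energy_smul, smul_eq_mul]
  rw [passiveEnergy_eq_sInf_image, passiveEnergy_eq_sInf_image, himage,
    Real.sInf_smul_of_nonneg hr, smul_eq_mul]

theorem sum_mul_passiveEnergy_le {ι : Type*} (s : Finset ι) {c : ι → ℝ} (hc : ∀ a ∈ s, 0 ≤ c a)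
    (ρ : ι → Matrix (Fin d) (Fin d) ℂ) :
    ∑ a ∈ s, c a * passiveEnergy H (ρ a) ≤ passiveEnergy H (∑ a ∈ s, c a • ρ a) := by
  refine le_passiveEnergy H fun U hU => ?_
  rw [Finset.mul_sum, Finset.sum_mul, energy_sum]
  refine Finset.sum_le_sum fun a ha => ?_
  rw [Matrix.mul_smul, Matrix.smul_mul, energy_smul]
  exact mul_le_mul_of_nonneg_left (passiveEnergy_le_energy_conj H (ρ a) hU) (hc a ha)

theorem ergotropy_smul {r : ℝ} (hr : 0 ≤ r) (ρ : Matrix (Fin d) (Fin d) ℂ) :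
    ergotropy H (r • ρ) = r * ergotropy H ρ := by
  rw [ergotropy, ergotropy, energy_smul, passiveEnergy_smul H hr, mul_sub]

theorem ergotropy_zero : ergotropy H 0 = 0 := by
  simpa using ergotropy_smul H le_rfl 0

theorem ergotropy_sum_smul_le {ι : Type*} (s : Finset ι) {c : ι → ℝ} (hc : ∀ a ∈ s, 0 ≤ c a)
    (ρ : ι → Matrix (Fin d) (Fin d) ℂ) :
    ergotropy H (∑ a ∈ s, c a • ρ a) ≤ ∑ a ∈ s, c a * ergotropy H (ρ a) := by
  have henergy : energy H (∑ a ∈ s, c a • ρ a) = ∑ a ∈ s, c a * energy H (ρ a) := by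
    rw [energy_sum]
    exact Finset.sum_congr rfl fun a _ => energy_smul H (c a) (ρ a)
  simp only [ergotropy, henergy, mul_sub, Finset.sum_sub_distrib]
  linarith [sum_mul_passiveEnergy_le H s hc ρ]

end Ergotropy

section ConditionalState

variable {dS dA : ℕ}

noncomputable def unnormalizedCondState (ρSA : Matrix (Fin dS × Fin dA) (Fin dS × Fin dA) ℂ) :
    Matrix (Fin dA) (Fin dA) ℂ →ₗ[ℂ] Matrix (Fin dS) (Fin dS) ℂ where
  toFun P := ptraceA (ρSA * ((1 : Matrix (Fin dS) (Fin dS) ℂ) ⊗ₖ P))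
  map_add' P Q := by
    ext i j
    simp [ptraceA, kronecker_add, Matrix.mul_add, Finset.sum_add_distrib]
  map_smul' c P := by
    ext i j
    simp [ptraceA, kronecker_smul, Finset.mul_sum]

theorem outProb_mul_ergotropy_condState (H : Matrix (Fin dS) (Fin dS) ℂ)
    {ρSA : Matrix (Fin dS × Fin dA) (Fin dS × Fin dA) ℂ} (hρ : ρSA.PosSemidef)
    {P : Matrix (Fin dA) (Fin dA) ℂ} (hP : P.PosSemidef) :
    outProb ρSA P * ergotropy H (condState ρSA P)
      = ergotropy H (unnormalizedCondState ρSA P) := by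
  have hP' : ((1 : Matrix (Fin dS) (Fin dS) ℂ) ⊗ₖ P).PosSemidef := PosSemidef.one.kronecker hP
  have htr := hρ.trace_mul_nonneg hP'
  have hprob : 0 ≤ outProb ρSA P := (Complex.nonneg_iff.mp htr).1
  rcases hprob.eq_or_lt with hzero | hpos
  · -- the trace is a nonnegative real, so a vanishing real part makes it vanish
    have hmul : ρSA * ((1 : Matrix (Fin dS) (Fin dS) ℂ) ⊗ₖ P) = 0 :=
      (hρ.trace_mul_eq_zero_iff hP').mp (Complex.ext hzero.symm (Complex.nonneg_iff.mp htr).2.symm)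
    have hτ : unnormalizedCondState ρSA P = 0 := by
      ext i j
      simp [unnormalizedCondState, ptraceA, hmul]
    rw [hτ, ergotropy_zero, ← hzero, zero_mul]
  · rw [condState, ergotropy_smul H (inv_nonneg.mpr hpos.le), ← mul_assoc,
      mul_inv_cancel₀ hpos.ne', one_mul]
    rfl

end ConditionalState

theorem daemonic_ergotropy_coarse_graining_general {dS dA n m : ℕ}
    (H : Matrix (Fin dS) (Fin dS) ℂ)
    (ρSA : Matrix (Fin dS × Fin dA) (Fin dS × Fin dA) ℂ)
    (hρ : ρSA.PosSemidef)
    (Pov : Fin n → Matrix (Fin dA) (Fin dA) ℂ)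
    (hPovpos : ∀ a, (Pov a).PosSemidef)
    (Pov' : Fin m → Matrix (Fin dA) (Fin dA) ℂ)
    (hPov'pos : ∀ b, (Pov' b).PosSemidef)
    (lam : Fin m → Fin n → ℝ) (hlam : ∀ b a, 0 ≤ lam b a)
    (hlamsum : ∀ a, ∑ b, lam b a = 1)
    (hcoarse : ∀ b, Pov' b = ∑ a, (lam b a : ℂ) • Pov a) :
    ∑ b, outProb ρSA (Pov' b) * ergotropy H (condState ρSA (Pov' b)) ≤
      ∑ a, outProb ρSA (Pov a) * ergotropy H (condState ρSA (Pov a)) := by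
  have hcoarseState : ∀ b, unnormalizedCondState ρSA (Pov' b)
      = ∑ a, lam b a • unnormalizedCondState ρSA (Pov a) := fun b => by
    simp only [hcoarse b, map_sum, Complex.coe_smul, LinearMap.map_smul_of_tower]
  calc ∑ b, outProb ρSA (Pov' b) * ergotropy H (condState ρSA (Pov' b))
      = ∑ b, ergotropy H (∑ a, lam b a • unnormalizedCondState ρSA (Pov a)) := by
        simp only [outProb_mul_ergotropy_condState H hρ (hPov'pos _), hcoarseState]
    _ ≤ ∑ b, ∑ a, lam b a * ergotropy H (unnormalizedCondState ρSA (Pov a)) :=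
        Finset.sum_le_sum fun b _ => ergotropy_sum_smul_le H _ (fun a _ => hlam b a) _
    _ = ∑ a, ergotropy H (unnormalizedCondState ρSA (Pov a)) := by
        simp only [Finset.sum_comm (γ := Fin m), ← Finset.sum_mul, hlamsum, one_mul]
    _ = ∑ a, outProb ρSA (Pov a) * ergotropy H (condState ρSA (Pov a)) := by
        simp only [outProb_mul_ergotropy_condState H hρ (hPovpos _)]

/-- coarse-graining a POVM cannot increase the daemonic ergotropy. -/
theorem daemonic_ergotropy_coarse_graining {dS dA n m : ℕ}
    (H : Matrix (Fin dS) (Fin dS) ℂ) (hH : H.IsHermitian)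
    (ρSA : Matrix (Fin dS × Fin dA) (Fin dS × Fin dA) ℂ)
    (hρ : ρSA.PosSemidef) (htr : ρSA.trace = 1)
    (Pov : Fin n → Matrix (Fin dA) (Fin dA) ℂ)
    (hPovpos : ∀ a, (Pov a).PosSemidef) (hPovsum : ∑ a, Pov a = 1)
    (Pov' : Fin m → Matrix (Fin dA) (Fin dA) ℂ)
    (hPov'pos : ∀ b, (Pov' b).PosSemidef) (hPov'sum : ∑ b, Pov' b = 1)
    (lam : Fin m → Fin n → ℝ) (hlam : ∀ b a, 0 ≤ lam b a)
    (hlamsum : ∀ a, ∑ b, lam b a = 1)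
    (hcoarse : ∀ b, Pov' b = ∑ a, (lam b a : ℂ) • Pov a) :
    ∑ b, outProb ρSA (Pov' b) * ergotropy H (condState ρSA (Pov' b)) ≤
      ∑ a, outProb ρSA (Pov a) * ergotropy H (condState ρSA (Pov a)) :=
  daemonic_ergotropy_coarse_graining_general H ρSA hρ Pov hPovpos Pov' hPov'pos lam hlam hlamsum
    hcoarse
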